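/- arXiv:1906.00907 — 4 statements merged into one kernel-verified Lean document; each statement's English description precedes it below -/
import Mathlib

section
/- Let n be a positive even integer and let {𝔊^Sp_z}_{z ∈ I^FPF_n} be the symplectic Grothendieck polynomials. For every z ∈ I^FPF_n and every i ∈ [n−1]: if i+1 ≠ z(i) > z(i+1) ≠ i then ∂_i^{(β)} 𝔊^Sp_z = 𝔊^Sp_{s_i z s_i}, and otherwise ∂_i^{(β)} 𝔊^Sp_z = −β·𝔊^Sp_z. -/
open MvPolynomial

noncomputable section

/-- The coefficient ring `ℤ[β]`. -/
abbrev Rb : Type := Polynomial ℤ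

/-- The indeterminate `β`. -/
def bb : Rb := Polynomial.X

/-- The order-reversing permutation `n⋯321`, i.e. `i ↦ n+1-i` in 1-indexed notation. -/
def revPerm (n : ℕ) : Equiv.Perm (Fin n) :=
  ⟨Fin.rev, Fin.rev, fun i => Fin.rev_rev i, fun i => Fin.rev_rev i⟩

/-- `z` is a fixed-point-free involution. -/
def IsFPF {n : ℕ} (z : Equiv.Perm (Fin n)) : Prop :=
  z * z = 1 ∧ ∀ i, z i ≠ i

/-- `x_i + x_j + β x_i x_j`. -/
def oplus {n : ℕ} (i j : Fin n) : MvPolynomial (Fin n) Rb :=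
  X i + X j + C bb * (X i * X j)

/-- `IsDivDiffB i j f g` encodes `∂_i^{(β)} f = g` where `j = i+1`:
`∂_i^{(β)} f = ((1+βx_j) f - s_i((1+βx_j) f)) / (x_i - x_j)`, stated multiplicatively
(the quotient is exact, and `g` is uniquely determined since the ring is a domain). -/
def IsDivDiffB {n : ℕ} (i j : Fin n) (f g : MvPolynomial (Fin n) Rb) : Prop :=
  (X i - X j) * g =
    (1 + C bb * X j) * f - rename ⇑(Equiv.swap i j) ((1 + C bb * X j) * f)

/-- `∏_{1 ≤ i < j ≤ n-i} (x_i + x_j + β x_i x_j)` (variables 0-indexed). -/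
def spTop (n : ℕ) : MvPolynomial (Fin n) Rb :=
  ∏ p ∈ Finset.univ.filter
      (fun p : Fin n × Fin n => p.1 < p.2 ∧ (p.1 : ℕ) + (p.2 : ℕ) + 2 ≤ n),
    oplus p.1 p.2

/-- `x_1^{n-1} x_2^{n-2} ⋯ x_{n-1}^1` (variables 0-indexed). -/
def grTop (n : ℕ) : MvPolynomial (Fin n) Rb :=
  ∏ a : Fin n, X a ^ (n - 1 - (a : ℕ))

/-- The defining property of the family of symplectic Grothendieck polynomials. -/
def IsSpFam (n : ℕ) (G : Equiv.Perm (Fin n) → MvPolynomial (Fin n) Rb) : Prop :=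
  G (revPerm n) = spTop n ∧
    ∀ z : Equiv.Perm (Fin n), IsFPF z →
      ∀ i j : Fin n, (j : ℕ) = (i : ℕ) + 1 →
        z i ≠ j → z j ≠ i → z j < z i →
          IsDivDiffB i j (G z) (G (Equiv.swap i j * z * Equiv.swap i j))

/-- The defining property of the family of Grothendieck polynomials. -/
def IsGrothFam (n : ℕ) (G : Equiv.Perm (Fin n) → MvPolynomial (Fin n) Rb) : Prop :=
  G (revPerm n) = grTop n ∧
    ∀ (w : Equiv.Perm (Fin n)) (i j : Fin n), (j : ℕ) = (i : ℕ) + 1 →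
      w j < w i → IsDivDiffB i j (G w) (G (w * Equiv.swap i j))

/-- The length (number of inversions) of a permutation. -/
def invLen {n : ℕ} (w : Equiv.Perm (Fin n)) : ℕ :=
  (Finset.univ.filter (fun p : Fin n × Fin n => p.1 < p.2 ∧ w p.2 < w p.1)).card

/-- The fixed-point-free involution length `ℓ_fpf(z) = #{(i,j) : z(i) > z(j) < i < j}`. -/
def fpfLen {n : ℕ} (z : Equiv.Perm (Fin n)) : ℕ :=
  (Finset.univ.filter
      (fun p : Fin n × Fin n => z p.2 < z p.1 ∧ z p.2 < p.1 ∧ p.1 < p.2)).card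

/-- The underlying function of `Θ = (1,2)(3,4)⋯(n-1,n)`. -/
def thetaFun (n : ℕ) (hn : n % 2 = 0) (i : Fin n) : Fin n :=
  ⟨if (i : ℕ) % 2 = 0 then (i : ℕ) + 1 else (i : ℕ) - 1, by
    have hi := i.isLt
    split_ifs with h <;> omega⟩

/-- The fixed-point-free involution `Θ = (1,2)(3,4)⋯(n-1,n)`. -/
def theta (n : ℕ) (hn : n % 2 = 0) : Equiv.Perm (Fin n) :=
  Function.Involutive.toPerm (thetaFun n hn) (by
    intro i
    have hi := i.isLt
    apply Fin.ext
    simp only [thetaFun]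
    split_ifs <;> omega)

/-- One step of the partial Hecke action: `heckeStep a z = some (z · s_{a+1})` when defined,
with `a` a 0-indexed letter (so `a` corresponds to the simple transposition of `a+1, a+2`
in 1-indexed notation). -/
def heckeStep {n : ℕ} (a : ℕ) (z : Equiv.Perm (Fin n)) : Option (Equiv.Perm (Fin n)) :=
  if h : a + 1 < n then
    let i : Fin n := ⟨a, Nat.lt_of_succ_lt h⟩
    let j : Fin n := ⟨a + 1, h⟩
    if z i < z j then some (Equiv.swap i j * z * Equiv.swap i j)
    else if z i = j ∧ z j = i then none
    else if z i ≠ j ∧ z j ≠ i ∧ z j < z i then some z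
    else none
  else none

/-- Apply a word of (0-indexed) letters to `z` via the partial Hecke action. -/
def heckeApply {n : ℕ} (l : List ℕ) (z : Equiv.Perm (Fin n)) :
    Option (Equiv.Perm (Fin n)) :=
  l.foldl (fun o a => o.bind (heckeStep a)) (some z)

/-- The simple transposition corresponding to the 0-indexed letter `a`. -/
def swapAt (n : ℕ) (a : ℕ) : Equiv.Perm (Fin n) :=
  if h : a + 1 < n then Equiv.swap ⟨a, Nat.lt_of_succ_lt h⟩ ⟨a + 1, h⟩ else 1

/-- The permutation `s_{i_1} s_{i_2} ⋯ s_{i_l}` of a word. -/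
def wordToPerm (n : ℕ) (l : List ℕ) : Equiv.Perm (Fin n) := (l.map (swapAt n)).prod

/-- `l` is a reduced word for `w`. -/
def IsReducedWord (n : ℕ) (w : Equiv.Perm (Fin n)) (l : List ℕ) : Prop :=
  (∀ a ∈ l, a + 1 < n) ∧ wordToPerm n l = w ∧ l.length = invLen w

/-- The set of Hecke atoms `B_fpf(z)`. -/
def Bfpf (n : ℕ) (hn : n % 2 = 0) (z : Equiv.Perm (Fin n)) :
    Finset (Equiv.Perm (Fin n)) :=
  @Finset.filter _
    (fun w => ∃ l : List ℕ, IsReducedWord n w l ∧ heckeApply l (theta n hn) = some z)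
    (Classical.decPred _) Finset.univ

/-- `extPerm z w` is the permutation `z × w` acting on the first `m` letters by `z`
and the last `n` letters by `w`. -/
def extPerm {m n : ℕ} (z : Equiv.Perm (Fin m)) (w : Equiv.Perm (Fin n)) :
    Equiv.Perm (Fin (m + n)) :=
  finSumFinEquiv.symm.trans ((Equiv.sumCongr z w).trans finSumFinEquiv)

/-- `rank(z_{[i][j]}) = #{k ∈ [j] : z(k) ≤ i}` (1-indexed sizes `i, j`). -/
def permRank {n : ℕ} (z : Equiv.Perm (Fin n)) (i j : ℕ) : ℕ :=
  (Finset.univ.filter (fun k : Fin n => (k : ℕ) < j ∧ ((z k : Fin n) : ℕ) < i)).card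

/-- The rank of the upper-left `i × j` corner of `A` (1-indexed sizes `i, j ≤ n`). -/
def cornerRank {n : ℕ} (A : Matrix (Fin n) (Fin n) ℂ) (i j : ℕ) : ℕ :=
  Matrix.rank (Matrix.of fun (a : Fin (min i n)) (b : Fin (min j n)) =>
    A ⟨(a : ℕ), lt_of_lt_of_le a.isLt (min_le_right i n)⟩
      ⟨(b : ℕ), lt_of_lt_of_le b.isLt (min_le_right j n)⟩)

/-- The orthogonal Rothe diagram `D^O(z) = {(i, z(j)) : z(i) > z(j) ≤ i < j}` (0-indexed). -/
def DO (n : ℕ) (z : Equiv.Perm (Fin n)) : Finset (Fin n × Fin n) :=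
  Finset.image (fun p : Fin n × Fin n => (p.1, z p.2))
    (Finset.univ.filter (fun p : Fin n × Fin n => z p.2 < z p.1 ∧ z p.2 ≤ p.1 ∧ p.1 < p.2))

/-- The symplectic Rothe diagram `D^Sp(z) = {(i, z(j)) : z(i) > z(j) < i < j}` (0-indexed). -/
def DSp (n : ℕ) (z : Equiv.Perm (Fin n)) : Finset (Fin n × Fin n) :=
  Finset.image (fun p : Fin n × Fin n => (p.1, z p.2))
    (Finset.univ.filter (fun p : Fin n × Fin n => z p.2 < z p.1 ∧ z p.2 < p.1 ∧ p.1 < p.2))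

/-- The essential set `Ess(D) = {(i,j) ∈ D : (i,j+1) ∉ D and (i+1,j) ∉ D}`. -/
def Ess {n : ℕ} (D : Finset (Fin n × Fin n)) : Finset (Fin n × Fin n) :=
  D.filter (fun p =>
    (∀ q ∈ D, ¬(q.1 = p.1 ∧ (q.2 : ℕ) = (p.2 : ℕ) + 1)) ∧
    (∀ q ∈ D, ¬((q.1 : ℕ) = (p.1 : ℕ) + 1 ∧ q.2 = p.2)))

/-- A permutation is vexillary if it avoids the pattern 2143. -/
def Vexillary {n : ℕ} (z : Equiv.Perm (Fin n)) : Prop :=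
  ¬ ∃ i j k l : Fin n, i < j ∧ j < k ∧ k < l ∧ z j < z i ∧ z i < z l ∧ z l < z k

/-- The ideal of `ℤ[x_1,…,x_N]` generated by symmetric polynomials with zero constant term. -/
def ILambda (N : ℕ) : Ideal (MvPolynomial (Fin N) ℤ) :=
  Ideal.span {f : MvPolynomial (Fin N) ℤ |
    (∀ σ : Equiv.Perm (Fin N), rename (⇑σ) f = f) ∧ coeff 0 f = 0}

/-- Substitute `x_j = 0` for all `j > n`, producing a polynomial in `x_1,…,x_n`. -/
def truncVars (n N : ℕ) (f : MvPolynomial (Fin N) Rb) : MvPolynomial (Fin n) Rb :=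
  aeval (fun i : Fin N => if h : (i : ℕ) < n then X ⟨(i : ℕ), h⟩ else 0) f

/-- The order used to list the elements of a pipe-dream subset `S`:
rows weakly increasing, columns strictly decreasing within a row. -/
def rowOrder {n : ℕ} (p q : Fin n × Fin n) : Prop :=
  p.1 < q.1 ∨ (p.1 = q.1 ∧ q.2 < p.2)

/-- `δ(S)` is a symplectic Hecke word for `z` (with Hecke words computed from `Θ`);
here `L` is the listing of `S` in the order `rowOrder`, and `(a,b) ∈ S` (0-indexed)
contributes the 0-indexed letter `a + b`, i.e. the 1-indexed letter `(b+1)+(a+1)-1`. -/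
def DeltaHeckeWord (n : ℕ) (hn : n % 2 = 0) (z : Equiv.Perm (Fin n))
    (S : Finset (Fin n × Fin n)) : Prop :=
  ∃ L : List (Fin n × Fin n), L.toFinset = S ∧ L.Chain' rowOrder ∧
    heckeApply (L.map (fun p => (p.1 : ℕ) + (p.2 : ℕ))) (theta n hn) = some z


/-!
The first claim is the defining recursion. For the second it suffices that `G z` is symmetric
in `x_i, x_{i+1}`: on such polynomials `∂_i^{(β)}` is multiplication by `-β`. If
`z i < z (i+1)`, then `G z = ∂_i^{(β)} G (s_i z s_i)`, and the image of `∂_i^{(β)}` consists of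
symmetric polynomials.

If `(i, i+1)` is a cycle of `z`, we induct along the weight `∑ x · z(x)`, which drops when `z`
is conjugated by `s_k` at an ascent `z k < z (k+1)`. The only involution without ascents is
`n⋯321`, whose polynomial is visibly symmetric. Otherwise `G z = ∂_k^{(β)} G (s_k z s_k)` for an
ascent `k`. If `{k, k+1}` and `{i, i+1}` are disjoint, `∂_k^{(β)}` commutes with `s_i`. If
`k = i + 1` (resp. `k + 1 = i`), conjugating once more by `s_i` gives an involution with the
cycle `(i+1, i+2)` (resp. `(i-1, i)`), and the braid relation carries the symmetry over: a
polynomial `f` symmetric in `x_b, x_c` equals `∂_{bc}^{(β)} (x_b f)`, so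
`∂_{bc}^{(β)} ∂_{ab}^{(β)} f = ∂_{ab}^{(β)} ∂_{bc}^{(β)} ∂_{ab}^{(β)} (x_b f)` lies in the image
of `∂_{ab}^{(β)}`, and symmetrically with the roles of `ab` and `bc` exchanged.
-/

theorem MvPolynomial.X_sub_X_dvd_sub_rename_swap {σ R : Type*} [CommRing R] [DecidableEq σ]
    (i j : σ) (f : MvPolynomial σ R) : X i - X j ∣ f - rename (Equiv.swap i j) f := by
  set π := Ideal.Quotient.mkₐ R (Ideal.span {(X i - X j : MvPolynomial σ R)})
  have hπ : π (X i) = π (X j) := Ideal.Quotient.eq.mpr (Ideal.mem_span_singleton_self _)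
  have h : π.comp (rename (Equiv.swap i j)) = π := by
    refine algHom_ext fun k => ?_
    rcases eq_or_ne k i with rfl | hki
    · simp [hπ]
    rcases eq_or_ne k j with rfl | hkj
    · simp [hπ]
    · simp [Equiv.swap_apply_of_ne_of_ne hki hkj]
  rw [← Ideal.mem_span_singleton, ← Ideal.Quotient.eq]
  exact (DFunLike.congr_fun h f).symm

theorem MvPolynomial.X_sub_X_ne_zero {σ R : Type*} [CommRing R] [Nontrivial R] {i j : σ}
    (hij : i ≠ j) : (X i - X j : MvPolynomial σ R) ≠ 0 :=
  sub_ne_zero.mpr (X_injective.ne hij)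

section DivDiff

variable {n : ℕ} {i j : Fin n} {f g : MvPolynomial (Fin n) Rb}

theorem isDivDiffB_iff : IsDivDiffB i j f g ↔
    (X i - X j) * g = (1 + C bb * X j) * f - (1 + C bb * X i) * rename (Equiv.swap i j) f := by
  simp [IsDivDiffB]

theorem IsDivDiffB.rename_eq (h : IsDivDiffB i j f g) (σ : Equiv.Perm (Fin n)) :
    (X (σ i) - X (σ j)) * rename σ g =
      (1 + C bb * X (σ j)) * rename σ f -
        (1 + C bb * X (σ i)) * rename ⇑(σ * Equiv.swap i j) f := by
  simpa [rename_rename] using congrArg (rename σ) (isDivDiffB_iff.mp h)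

theorem IsDivDiffB.unique {g' : MvPolynomial (Fin n) Rb} (hij : i ≠ j)
    (h : IsDivDiffB i j f g) (h' : IsDivDiffB i j f g') : g = g' :=
  mul_left_cancel₀ (X_sub_X_ne_zero hij) (h.trans h'.symm)

theorem exists_isDivDiffB (i j : Fin n) (f : MvPolynomial (Fin n) Rb) :
    ∃ g, IsDivDiffB i j f g :=
  let ⟨g, hg⟩ := X_sub_X_dvd_sub_rename_swap i j ((1 + C bb * X j) * f)
  ⟨g, hg.symm⟩

theorem IsDivDiffB.rename_swap_eq (hij : i ≠ j) (h : IsDivDiffB i j f g) :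
    rename (Equiv.swap i j) g = g := by
  have hs := h.rename_eq (Equiv.swap i j)
  simp only [Equiv.swap_apply_left, Equiv.swap_apply_right, Equiv.swap_mul_self,
    Equiv.Perm.coe_one, rename_id_apply] at hs
  refine mul_left_cancel₀ (X_sub_X_ne_zero hij) ?_
  linear_combination -hs - isDivDiffB_iff.mp h

theorem isDivDiffB_neg_C_mul (hf : rename (Equiv.swap i j) f = f) :
    IsDivDiffB i j f (-C bb * f) := by
  rw [isDivDiffB_iff, hf]
  ring

theorem isDivDiffB_X_mul (hf : rename (Equiv.swap i j) f = f) :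
    IsDivDiffB i j (X i * f) f := by
  rw [isDivDiffB_iff]
  simp only [map_mul, rename_X, Equiv.swap_apply_left, hf]
  ring

theorem IsDivDiffB.rename_swap_eq_of_disjoint {k l : Fin n} (hij : i ≠ j) (hkl : k ≠ l)
    (hki : k ≠ i) (hkj : k ≠ j) (hli : l ≠ i) (hlj : l ≠ j) (hf : rename (Equiv.swap i j) f = f)
    (h : IsDivDiffB k l f g) :
    rename (Equiv.swap i j) g = g := by
  have hcomm : Equiv.swap i j * Equiv.swap k l = Equiv.swap k l * Equiv.swap i j :=
    (Equiv.Perm.disjoint_swap_swap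
      (by simp [hij, hkl, hki.symm, hkj.symm, hli.symm, hlj.symm])).commute.eq
  have hs := h.rename_eq (Equiv.swap i j)
  rw [hcomm, Equiv.Perm.coe_mul, ← rename_rename, hf, Equiv.swap_apply_of_ne_of_ne hki hkj,
    Equiv.swap_apply_of_ne_of_ne hli hlj, ← isDivDiffB_iff] at hs
  exact (h.unique hkl hs).symm

end DivDiff

section Braid

variable {n : ℕ} {a b c : Fin n} {f g h : MvPolynomial (Fin n) Rb}

theorem IsDivDiffB.braid (hab : a ≠ b) (hbc : b ≠ c) (hac : a ≠ c)
    {u f₁ f₂ f₃ g₁ g₂ g₃ : MvPolynomial (Fin n) Rb}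
    (hf₁ : IsDivDiffB a b u f₁) (hf₂ : IsDivDiffB b c f₁ f₂) (hf₃ : IsDivDiffB a b f₂ f₃)
    (hg₁ : IsDivDiffB b c u g₁) (hg₂ : IsDivDiffB a b g₁ g₂) (hg₃ : IsDivDiffB b c g₂ g₃) :
    f₃ = g₃ := by
  set s := Equiv.swap a b
  set t := Equiv.swap b c
  have hsts : t * s * t = s * t * s := by
    ext x
    simp only [s, t, Equiv.Perm.mul_apply, Equiv.swap_apply_def]
    split_ifs <;> simp_all
  have hA := isDivDiffB_iff.mp hf₁
  have htA := hf₁.rename_eq t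
  have hstA := hf₁.rename_eq (s * t)
  have hB := isDivDiffB_iff.mp hf₂
  have hsB := hf₂.rename_eq s
  have hC := isDivDiffB_iff.mp hf₃
  have hA' := isDivDiffB_iff.mp hg₁
  have hsA' := hg₁.rename_eq s
  have htsA' := hg₁.rename_eq (t * s)
  have hB' := isDivDiffB_iff.mp hg₂
  have htB' := hg₂.rename_eq t
  have hC' := isDivDiffB_iff.mp hg₃
  rw [hf₁.rename_swap_eq hab] at hsB
  rw [hg₁.rename_swap_eq hbc] at htB'
  rw [hsts] at htsA'
  have hsa : s a = b := Equiv.swap_apply_left a b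
  have hsb : s b = a := Equiv.swap_apply_right a b
  have hsc : s c = c := Equiv.swap_apply_of_ne_of_ne hac.symm hbc.symm
  have hta : t a = a := Equiv.swap_apply_of_ne_of_ne hab hac
  have htb : t b = c := Equiv.swap_apply_left b c
  have htc : t c = b := Equiv.swap_apply_right b c
  simp only [Equiv.Perm.mul_apply, hsa, hsb, hsc, hta, htb, htc] at htA hstA hsB hsA' htsA' htB'
  simp only [s, t] at *
  -- `V f₃` and `V g₃`, with `V` the Vandermonde product in `x_a, x_b, x_c`, are the same
  -- combination of the six images of `u` under the group generated by `s` and `t`.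
  refine mul_left_cancel₀ (mul_ne_zero (mul_ne_zero (X_sub_X_ne_zero hab) (X_sub_X_ne_zero hbc))
    (X_sub_X_ne_zero hac)) ?_
  linear_combination
    ((X b - X c) * (X a - X c) * hC + (X a - X c) * (1 + C bb * X b) * hB
      - (X b - X c) * (1 + C bb * X a) * hsB + (1 + C bb * X c) ^ 2 * hA
      - (1 + C bb * X b) ^ 2 * htA + (1 + C bb * X a) ^ 2 * hstA)
    - ((X a - X b) * (X a - X c) * hC' + (X a - X c) * (1 + C bb * X c) * hB'
      - (X a - X b) * (1 + C bb * X b) * htB' + (1 + C bb * X c) * (1 + C bb * X b) * hA'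
      - (1 + C bb * X a) * (1 + C bb * X c) * hsA' + (1 + C bb * X a) * (1 + C bb * X b) * htsA')

theorem rename_swap_eq_of_isDivDiffB_ab_bc (hab : a ≠ b) (hbc : b ≠ c) (hac : a ≠ c)
    (hf : rename (Equiv.swap b c) f = f) (hg : IsDivDiffB a b f g) (hh : IsDivDiffB b c g h) :
    rename (Equiv.swap a b) h = h := by
  obtain ⟨f₁, hf₁⟩ := exists_isDivDiffB a b (X b * f)
  obtain ⟨f₂, hf₂⟩ := exists_isDivDiffB b c f₁
  obtain ⟨f₃, hf₃⟩ := exists_isDivDiffB a b f₂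
  rw [← IsDivDiffB.braid hab hbc hac hf₁ hf₂ hf₃ (isDivDiffB_X_mul hf) hg hh]
  exact hf₃.rename_swap_eq hab

theorem rename_swap_eq_of_isDivDiffB_bc_ab (hab : a ≠ b) (hbc : b ≠ c) (hac : a ≠ c)
    (hf : rename (Equiv.swap a b) f = f) (hg : IsDivDiffB b c f g) (hh : IsDivDiffB a b g h) :
    rename (Equiv.swap b c) h = h := by
  obtain ⟨g₁, hg₁⟩ := exists_isDivDiffB b c (X a * f)
  obtain ⟨g₂, hg₂⟩ := exists_isDivDiffB a b g₁
  obtain ⟨g₃, hg₃⟩ := exists_isDivDiffB b c g₂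
  rw [IsDivDiffB.braid hab hbc hac (isDivDiffB_X_mul hf) hg hh hg₁ hg₂ hg₃]
  exact hg₃.rename_swap_eq hbc

end Braid

section FPF
variable {n : ℕ} {z : Equiv.Perm (Fin n)}

theorem IsFPF.apply_apply (hz : IsFPF z) (x : Fin n) : z (z x) = x := by
  simpa using DFunLike.congr_fun hz.1 x

theorem IsFPF.apply_eq_iff (hz : IsFPF z) {x y : Fin n} : z x = y ↔ x = z y := by
  constructor <;> rintro rfl <;> simp [hz.apply_apply]

theorem IsFPF.conj_swap (hz : IsFPF z) (a b : Fin n) :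
    IsFPF (Equiv.swap a b * z * Equiv.swap a b) := by
  refine ⟨?_, fun x hx => hz.2 (Equiv.swap a b x) (Equiv.swap_apply_eq_iff.mp hx)⟩
  ext x
  simp [hz.apply_apply]

theorem conj_swap_conj_swap (z : Equiv.Perm (Fin n)) (a b : Fin n) :
    Equiv.swap a b * (Equiv.swap a b * z * Equiv.swap a b) * Equiv.swap a b = z := by
  simp [mul_assoc]

theorem IsFPF.apply_ne_of_lt (hz : IsFPF z) {k l : Fin n} (hkl : k < l) (hlt : z k < z l) :
    z k ≠ l ∧ z l ≠ k := by
  have key : z k = l ↔ z l = k := by rw [hz.apply_eq_iff, eq_comm]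
  constructor
  · intro h
    rw [h, key.mp h] at hlt
    exact lt_asymm hkl hlt
  · intro h
    rw [key.mpr h, h] at hlt
    exact lt_asymm hkl hlt

def permWeight (z : Equiv.Perm (Fin n)) : ℕ := ∑ x : Fin n, (x : ℕ) * (z x : ℕ)

theorem permWeight_conj_swap (hz : IsFPF z) {k l : Fin n} (hkl : (l : ℕ) = k + 1)
    (hzk : z k ≠ l) (hzl : z l ≠ k) :
    (permWeight (Equiv.swap k l * z * Equiv.swap k l) : ℤ) + 2 * ((z l : ℕ) - (z k : ℕ)) =
      permWeight z := by
  -- Write `s y = y + δ y` with `δ = 𝟙_k - 𝟙_l`. Expanding `∑ s y · s (z y)`, both cross terms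
  -- give `z k - z l`, and `∑ δ y · δ (z y)` vanishes because `z` maps `k, l` outside `{k, l}`.
  set s := Equiv.swap k l
  have hs : ∀ y, ((s y : ℕ) : ℤ) =
      y + ((if y = k then 1 else 0) - (if y = l then 1 else 0)) := by
    intro y
    rcases eq_or_ne y k with rfl | hyk
    · simp [s, hkl, Fin.ext_iff]
    rcases eq_or_ne y l with rfl | hyl
    · simp [s, hkl, Fin.ext_iff]
    · simp [s, Equiv.swap_apply_of_ne_of_ne hyk hyl, hyk, hyl]
  have hreindex :
      (permWeight (s * z * s) : ℤ) = ∑ y, ((s y : ℕ) : ℤ) * ((s (z y) : ℕ) : ℤ) := by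
    rw [permWeight, ← Equiv.sum_comp s]
    push_cast
    simp [s]
  have hzsum : ∑ y : Fin n,
      ((y : ℕ) : ℤ) * ((if z y = k then 1 else 0) - (if z y = l then 1 else 0)) =
        (z k : ℕ) - (z l : ℕ) := by
    simp [hz.apply_eq_iff, mul_sub, Finset.sum_sub_distrib]
  rw [hreindex, permWeight]
  simp only [hs, add_mul, mul_add, Finset.sum_add_distrib, hzsum]
  push_cast
  simp [sub_mul, Finset.sum_sub_distrib, hz.2 k, hz.2 l, hzk, hzl]
  ring

theorem permWeight_conj_swap_lt (hz : IsFPF z) {k l : Fin n} (hkl : (l : ℕ) = k + 1)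
    (hlt : z k < z l) :
    permWeight (Equiv.swap k l * z * Equiv.swap k l) < permWeight z := by
  obtain ⟨hzk, hzl⟩ := hz.apply_ne_of_lt (Fin.lt_def.mpr (by omega)) hlt
  have := permWeight_conj_swap hz hkl hzk hzl
  have : (z k : ℕ) < z l := hlt
  omega

theorem exists_lt_of_ne_revPerm (h : z ≠ revPerm n) :
    ∃ k l : Fin n, (l : ℕ) = k + 1 ∧ z k < z l := by
  contrapose! h
  obtain _ | m := n
  · exact Subsingleton.elim _ _
  have hmono : StrictMono fun x => Fin.rev (z x) := Fin.strictMono_iff_lt_succ.mpr fun x =>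
    Fin.rev_lt_rev.mpr ((h x.castSucc x.succ (by simp)).lt_of_ne
      (z.injective.ne (Fin.castSucc_lt_succ (i := x)).ne'))
  refine Equiv.ext fun x => ?_
  change z x = Fin.rev x
  rw [← Fin.rev_inj, Fin.rev_rev]
  exact hmono.apply_eq

end FPF

section SpFam
variable {n : ℕ} {G : Equiv.Perm (Fin n) → MvPolynomial (Fin n) Rb} {z : Equiv.Perm (Fin n)}

theorem rename_swap_spTop {i j : Fin n} (hij : (j : ℕ) = i + 1) (hn : n = 2 * i + 2) :
    rename (Equiv.swap i j) (spTop n) = spTop n := by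
  rw [spTop, map_prod]
  refine Finset.prod_equiv ((Equiv.swap i j).prodCongr (Equiv.swap i j)) (fun p => ?_)
    (fun p _ => by simp [oplus])
  simp only [Finset.mem_filter, Finset.mem_univ, true_and, Equiv.prodCongr_apply, Prod.map,
    Fin.lt_def, Equiv.swap_apply_def]
  split_ifs <;> simp_all [Fin.ext_iff] <;> omega

theorem IsSpFam.isDivDiffB_of_lt (hG : IsSpFam n G) (hz : IsFPF z) {k l : Fin n}
    (hkl : (l : ℕ) = k + 1) (hlt : z k < z l) :
    IsDivDiffB k l (G (Equiv.swap k l * z * Equiv.swap k l)) (G z) := by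
  obtain ⟨hzk, hzl⟩ := hz.apply_ne_of_lt (Fin.lt_def.mpr (by omega)) hlt
  have hk : (Equiv.swap k l * z * Equiv.swap k l) k = z l := by
    simp [Equiv.swap_apply_of_ne_of_ne hzl (hz.2 l)]
  have hl : (Equiv.swap k l * z * Equiv.swap k l) l = z k := by
    simp [Equiv.swap_apply_of_ne_of_ne (hz.2 k) hzk]
  have h := hG.2 _ (hz.conj_swap k l) k l hkl (hk ▸ hz.2 l) (hl ▸ hz.2 k) (hk ▸ hl ▸ hlt)
  rwa [conj_swap_conj_swap] at h

def SymmetricAtAdjacentCycles (G : Equiv.Perm (Fin n) → MvPolynomial (Fin n) Rb)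
    (z : Equiv.Perm (Fin n)) : Prop :=
  ∀ i j : Fin n, (j : ℕ) = i + 1 → z i = j → rename (Equiv.swap i j) (G z) = G z

theorem symmetricAtAdjacentCycles_revPerm (hG : IsSpFam n G) :
    SymmetricAtAdjacentCycles G (revPerm n) := by
  intro i j hij hi
  have : (j : ℕ) = n - (i + 1) := congrArg Fin.val hi.symm
  rw [hG.1]
  exact rename_swap_spTop hij (by omega)

theorem IsSpFam.rename_swap_eq_of_lt_right (hG : IsSpFam n G) (hz : IsFPF z)
    (ih : ∀ z', permWeight z' < permWeight z → IsFPF z' → SymmetricAtAdjacentCycles G z')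
    {i j l : Fin n} (hij : (j : ℕ) = i + 1) (hjl : (l : ℕ) = j + 1) (hzi : z i = j)
    (hlt : z j < z l) : rename (Equiv.swap i j) (G z) = G z := by
  have hzj : z j = i := hz.apply_eq_iff.mpr hzi.symm
  have hzl : (l : ℕ) < z l := by
    have h₁ : z l ≠ j := fun h => by have := hz.apply_eq_iff.mp h; rw [hzj] at this; omega
    have h₂ := hz.2 l
    have h₃ : (i : ℕ) < z l := hzj ▸ hlt
    omega
  set z₂ := Equiv.swap j l * z * Equiv.swap j l
  have hz₂ : IsFPF z₂ := hz.conj_swap j l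
  have h₂i : z₂ i = l := by
    simp [z₂, Equiv.swap_apply_of_ne_of_ne (show i ≠ j by omega) (show i ≠ l by omega), hzi]
  have h₂j : z₂ j = z l := by
    simp [z₂, Equiv.swap_apply_of_ne_of_ne (show z l ≠ j by omega) (show z l ≠ l by omega)]
  have hlt₂ : z₂ i < z₂ j := by rw [h₂i, h₂j]; exact hzl
  have h₃j : (Equiv.swap i j * z₂ * Equiv.swap i j) j = l := by
    simp [h₂i, Equiv.swap_apply_of_ne_of_ne (show l ≠ i by omega) (show l ≠ j by omega)]
  have hw := (permWeight_conj_swap_lt hz₂ hij hlt₂).trans (permWeight_conj_swap_lt hz hjl hlt)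
  have hsym := ih _ hw (hz₂.conj_swap i j) j l hjl h₃j
  exact rename_swap_eq_of_isDivDiffB_ab_bc (by omega) (by omega) (by omega) hsym
    (hG.isDivDiffB_of_lt hz₂ hij hlt₂) (hG.isDivDiffB_of_lt hz hjl hlt)

theorem IsSpFam.rename_swap_eq_of_lt_left (hG : IsSpFam n G) (hz : IsFPF z)
    (ih : ∀ z', permWeight z' < permWeight z → IsFPF z' → SymmetricAtAdjacentCycles G z')
    {k i j : Fin n} (hki : (i : ℕ) = k + 1) (hij : (j : ℕ) = i + 1) (hzi : z i = j)
    (hlt : z k < z i) : rename (Equiv.swap i j) (G z) = G z := by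
  have hzj : z j = i := hz.apply_eq_iff.mpr hzi.symm
  have hzk : (z k : ℕ) < k := by
    have h₁ : z k ≠ i := fun h => by have := hz.apply_eq_iff.mp h; rw [hzi] at this; omega
    have h₂ := hz.2 k
    have h₃ : (z k : ℕ) < j := hzi ▸ hlt
    omega
  set z₂ := Equiv.swap k i * z * Equiv.swap k i
  have hz₂ : IsFPF z₂ := hz.conj_swap k i
  have h₂i : z₂ i = z k := by
    simp [z₂, Equiv.swap_apply_of_ne_of_ne (show z k ≠ k by omega) (show z k ≠ i by omega)]
  have h₂j : z₂ j = k := by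
    simp [z₂, Equiv.swap_apply_of_ne_of_ne (show j ≠ k by omega) (show j ≠ i by omega), hzj]
  have hlt₂ : z₂ i < z₂ j := by rw [h₂i, h₂j]; exact hzk
  have h₃k : (Equiv.swap i j * z₂ * Equiv.swap i j) k = i := by
    simp [z₂, Equiv.swap_apply_of_ne_of_ne (show k ≠ i by omega) (show k ≠ j by omega), hzi,
      Equiv.swap_apply_of_ne_of_ne (show j ≠ k by omega) (show j ≠ i by omega)]
  have hw := (permWeight_conj_swap_lt hz₂ hij hlt₂).trans (permWeight_conj_swap_lt hz hki hlt)
  have hsym := ih _ hw (hz₂.conj_swap i j) k i hki h₃k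
  exact rename_swap_eq_of_isDivDiffB_bc_ab (by omega) (by omega) (by omega) hsym
    (hG.isDivDiffB_of_lt hz₂ hij hlt₂) (hG.isDivDiffB_of_lt hz hki hlt)

theorem IsSpFam.rename_swap_eq_of_lt_of_disjoint (hG : IsSpFam n G) (hz : IsFPF z)
    (ih : ∀ z', permWeight z' < permWeight z → IsFPF z' → SymmetricAtAdjacentCycles G z')
    {i j k l : Fin n} (hij : (j : ℕ) = i + 1) (hkl : (l : ℕ) = k + 1) (hzi : z i = j)
    (hlt : z k < z l) (hki : k ≠ i) (hkj : k ≠ j) (hli : l ≠ i) (hlj : l ≠ j) :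
    rename (Equiv.swap i j) (G z) = G z := by
  have h₂i : (Equiv.swap k l * z * Equiv.swap k l) i = j := by
    simp [Equiv.swap_apply_of_ne_of_ne hki.symm hli.symm, hzi,
      Equiv.swap_apply_of_ne_of_ne hkj.symm hlj.symm]
  exact IsDivDiffB.rename_swap_eq_of_disjoint (by omega) (by omega) hki hkj hli hlj
    (ih _ (permWeight_conj_swap_lt hz hkl hlt) (hz.conj_swap k l) i j hij h₂i)
    (hG.isDivDiffB_of_lt hz hkl hlt)

theorem IsSpFam.symmetricAtAdjacentCycles (hG : IsSpFam n G) {z : Equiv.Perm (Fin n)}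
    (hz : IsFPF z) : SymmetricAtAdjacentCycles G z := by
  by_cases hrev : z = revPerm n
  · exact hrev ▸ symmetricAtAdjacentCycles_revPerm hG
  obtain ⟨k, l, hkl, hlt⟩ := exists_lt_of_ne_revPerm hrev
  have ih : ∀ z', permWeight z' < permWeight z → IsFPF z' → SymmetricAtAdjacentCycles G z' :=
    fun z' _ hz' => hG.symmetricAtAdjacentCycles hz'
  intro i j hij hzi
  have hki : k ≠ i := by
    rintro rfl
    exact (hz.apply_ne_of_lt (Fin.lt_def.mpr (by omega)) hlt).1 (hzi.trans (by omega))
  by_cases hkj : k = j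
  · subst hkj
    exact hG.rename_swap_eq_of_lt_right hz ih hij hkl hzi hlt
  by_cases hli : l = i
  · subst hli
    exact hG.rename_swap_eq_of_lt_left hz ih hkl hij hzi hlt
  exact hG.rename_swap_eq_of_lt_of_disjoint hz ih hij hkl hzi hlt hki hkj hli (by omega)
termination_by permWeight z

end SpFam

theorem statement1_general (n : ℕ)
    (G : Equiv.Perm (Fin n) → MvPolynomial (Fin n) Rb) (hG : IsSpFam n G)
    (z : Equiv.Perm (Fin n)) (hz : IsFPF z)
    (i j : Fin n) (hij : (j : ℕ) = (i : ℕ) + 1) :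
    (z i ≠ j → z j ≠ i → z j < z i →
      IsDivDiffB i j (G z) (G (Equiv.swap i j * z * Equiv.swap i j))) ∧
    (¬(z i ≠ j ∧ z j ≠ i ∧ z j < z i) →
      IsDivDiffB i j (G z) (-(C bb) * G z)) := by
  refine ⟨hG.2 z hz i j hij, fun hnot => isDivDiffB_neg_C_mul ?_⟩
  by_cases hzi : z i = j
  · exact hG.symmetricAtAdjacentCycles hz i j hij hzi
  have hzj : z j ≠ i := fun h => hzi (hz.apply_eq_iff.mp h).symm
  have hlt : z i < z j :=
    lt_of_le_of_ne (not_lt.mp fun h => hnot ⟨hzi, hzj, h⟩) (z.injective.ne (by omega))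
  exact (hG.isDivDiffB_of_lt hz hij hlt).rename_swap_eq (by omega)

theorem statement1 (n : ℕ) (hpos : 0 < n) (hev : n % 2 = 0)
    (G : Equiv.Perm (Fin n) → MvPolynomial (Fin n) Rb) (hG : IsSpFam n G)
    (z : Equiv.Perm (Fin n)) (hz : IsFPF z)
    (i j : Fin n) (hij : (j : ℕ) = (i : ℕ) + 1) :
    (z i ≠ j → z j ≠ i → z j < z i →
      IsDivDiffB i j (G z) (G (Equiv.swap i j * z * Equiv.swap i j))) ∧
    (¬(z i ≠ j ∧ z j ≠ i ∧ z j < z i) →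
      IsDivDiffB i j (G z) (-(C bb) * G z)) :=
  statement1_general n G hG z hz i j hij

end
end

section
/- Let K ∈ {O, Sp} and z ∈ I_n. Then MX^K_z = {A ∈ Mat^K_n : rank(A_{[i][j]}) ≤ rank(z_{[i][j]}) for all (i,j) ∈ Ess(D^O(z))}; that is, a matrix A ∈ Mat^K_n satisfies rank(A_{[i][j]}) ≤ rank(z_{[i][j]}) for all i,j ∈ [n] if and only if it satisfies these inequalities for all (i,j) in the essential set Ess(D^O(z)). -/
open MvPolynomial

noncomputable section

/-! Both corner-rank functions are symmetric in `(i, j)`, since `A` is symmetric or skew-symmetric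
and `z` is an involution, and both grow by at most one when a column is added; the rank of `z`
grows exactly when the new column has its `1` inside the corner. Inside `D^O(z)` one can walk
right or down to an essential box without changing the rank of `z`, while the rank of `A` can
only grow, so the bounds at essential boxes give the bounds on all of `D^O(z)`. Outside the
diagram (taking `j ≤ i` by symmetry) the last column or row of the corner carries a `1` of `z`,
which reduces the bound to a smaller corner. -/

open scoped Matrix

theorem Equiv.Perm.apply_apply_of_mul_self_eq_one {α : Type*} {σ : Equiv.Perm α} (h : σ * σ = 1)
    (x : α) : σ (σ x) = x := by
  simpa using DFunLike.congr_fun h x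

namespace Matrix

variable {K m n n₀ : Type*} [Field K] [Fintype n]

theorem rank_neg (M : Matrix m n K) : (-M).rank = M.rank := by
  simpa using rank_smul_of_mem_nonZeroDivisors M (c := (-1 : K)) (by simp)

theorem rank_le_rank_submatrix_add_one [Fintype m] [Fintype n₀] (M : Matrix m n K) (c : n₀ → n)
    (j₀ : n) (hc : ∀ j, j ∈ Set.range c ∨ j = j₀) : M.rank ≤ (M.submatrix id c).rank + 1 := by
  rw [rank_eq_finrank_span_cols, rank_eq_finrank_span_cols]
  have hspan : Submodule.span K (Set.range M.col) ≤
      Submodule.span K (Set.range (M.submatrix id c).col) ⊔ Submodule.span K {M.col j₀} := by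
    rw [← Submodule.span_union]
    refine Submodule.span_mono ?_
    rintro _ ⟨j, rfl⟩
    rcases hc j with ⟨k, rfl⟩ | rfl
    · exact Or.inl ⟨k, rfl⟩
    · exact Or.inr rfl
  calc _ ≤ _ := Submodule.finrank_mono hspan
    _ ≤ _ := Submodule.finrank_add_le_finrank_add_finrank _ _
    _ ≤ _ := by
      gcongr
      simpa using finrank_span_le_card ({M.col j₀} : Set (m → K))

end Matrix

theorem cornerRank_eq_rank_submatrix {n : ℕ} (A : Matrix (Fin n) (Fin n) ℂ) (i j : ℕ) :
    cornerRank A i j =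
      (A.submatrix (Fin.castLE (min_le_right i n)) (Fin.castLE (min_le_right j n))).rank :=
  rfl

theorem cornerRank_transpose {n : ℕ} (A : Matrix (Fin n) (Fin n) ℂ) (i j : ℕ) :
    cornerRank Aᵀ i j = cornerRank A j i := by
  rw [cornerRank_eq_rank_submatrix, cornerRank_eq_rank_submatrix, ← Matrix.transpose_submatrix,
    Matrix.rank_transpose]

theorem cornerRank_neg {n : ℕ} (A : Matrix (Fin n) (Fin n) ℂ) (i j : ℕ) :
    cornerRank (-A) i j = cornerRank A i j := by
  rw [cornerRank_eq_rank_submatrix, cornerRank_eq_rank_submatrix]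
  exact Matrix.rank_neg _

theorem cornerRank_comm {n : ℕ} {A : Matrix (Fin n) (Fin n) ℂ}
    (hA : Aᵀ = A ∨ Aᵀ = -A) (i j : ℕ) : cornerRank A i j = cornerRank A j i := by
  rcases hA with h | h
  · rw [← cornerRank_transpose, h]
  · rw [← cornerRank_transpose, h, cornerRank_neg]

theorem cornerRank_zero_right {n : ℕ} (A : Matrix (Fin n) (Fin n) ℂ) (i : ℕ) :
    cornerRank A i 0 = 0 := by
  rw [cornerRank_eq_rank_submatrix]
  exact Nat.le_zero.mp ((Matrix.rank_le_width _).trans (by simp))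

theorem cornerRank_le_succ_right {n : ℕ} (A : Matrix (Fin n) (Fin n) ℂ) (i j : ℕ) :
    cornerRank A i j ≤ cornerRank A i (j + 1) := by
  calc cornerRank A i j
      = ((A.submatrix (Fin.castLE (min_le_right i n))
          (Fin.castLE (min_le_right (j + 1) n))).submatrix
            id (Fin.castLE (min_le_min_right n j.le_succ))).rank := rfl
    _ ≤ cornerRank A i (j + 1) := Matrix.rank_submatrix_le _ _ _

theorem cornerRank_succ_right_le {n : ℕ} (A : Matrix (Fin n) (Fin n) ℂ) (i : ℕ) {j : ℕ}
    (hj : j < n) : cornerRank A i (j + 1) ≤ cornerRank A i j + 1 := by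
  rw [cornerRank_eq_rank_submatrix, cornerRank_eq_rank_submatrix]
  refine Matrix.rank_le_rank_submatrix_add_one _ (Fin.castLE (min_le_min_right n j.le_succ))
    ⟨j, by omega⟩ fun k => ?_
  by_cases hk : (k : ℕ) < j
  · exact Or.inl ⟨⟨k, by omega⟩, rfl⟩
  · refine Or.inr (Fin.ext ?_)
    have := k.isLt.trans_le (min_le_left _ _)
    show (k : ℕ) = j
    omega

theorem permRank_comm {n : ℕ} {z : Equiv.Perm (Fin n)} (hz : z * z = 1) (i j : ℕ) :
    permRank z i j = permRank z j i := by
  have hzz := Equiv.Perm.apply_apply_of_mul_self_eq_one hz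
  refine Finset.card_bij' (fun k _ => z k) (fun k _ => z k) ?_ ?_ (fun k _ => hzz k)
    (fun k _ => hzz k) <;>
  · intro k hk
    simp only [Finset.mem_filter, Finset.mem_univ, true_and, hzz] at hk ⊢
    exact hk.symm

theorem permRank_succ_right {n : ℕ} (z : Equiv.Perm (Fin n)) (i : ℕ) {j : ℕ} (hj : j < n) :
    permRank z i (j + 1) = permRank z i j + if (z ⟨j, hj⟩ : ℕ) < i then 1 else 0 := by
  unfold permRank
  split_ifs with h
  · rw [← Finset.card_insert_of_notMem (a := (⟨j, hj⟩ : Fin n)) (by simp)]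
    congr 1
    ext k
    simp only [Finset.mem_filter, Finset.mem_univ, true_and, Finset.mem_insert]
    grind
  · rw [add_zero]
    congr 1
    ext k
    simp only [Finset.mem_filter, Finset.mem_univ, true_and]
    grind

theorem mem_DO_iff {n : ℕ} {z : Equiv.Perm (Fin n)} (hz : z * z = 1) (a c : Fin n) :
    (a, c) ∈ DO n z ↔ c ≤ a ∧ c < z a ∧ a < z c := by
  have hzz := Equiv.Perm.apply_apply_of_mul_self_eq_one hz
  simp only [DO, Finset.mem_image, Finset.mem_filter, Finset.mem_univ, true_and, Prod.exists,
    Prod.mk.injEq]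
  constructor
  · rintro ⟨a, b, ⟨h₁, h₂, h₃⟩, rfl, rfl⟩
    exact ⟨h₂, h₁, by rwa [hzz]⟩
  · rintro ⟨h₁, h₂, h₃⟩
    exact ⟨a, z c, ⟨by rwa [hzz], by rwa [hzz], h₃⟩, rfl, by rw [hzz]⟩

theorem exists_right_or_below_of_notMem_Ess {n : ℕ} {D : Finset (Fin n × Fin n)} {a c : Fin n}
    (hD : (a, c) ∈ D) (hE : (a, c) ∉ Ess D) :
    (∃ h : (c : ℕ) + 1 < n, (a, ⟨c + 1, h⟩) ∈ D) ∨
      ∃ h : (a : ℕ) + 1 < n, (⟨a + 1, h⟩, c) ∈ D := by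
  simp only [Ess, Finset.mem_filter, hD, true_and, not_and_or] at hE
  push Not at hE
  rcases hE with ⟨⟨a', c'⟩, hq, rfl, hc'⟩ | ⟨⟨a', c'⟩, hq, ha', rfl⟩
  · have hc'' : c' = ⟨c + 1, hc' ▸ c'.isLt⟩ := Fin.ext hc'
    exact Or.inl ⟨_, hc'' ▸ hq⟩
  · have ha'' : a' = ⟨a + 1, ha' ▸ a'.isLt⟩ := Fin.ext ha'
    exact Or.inr ⟨_, ha'' ▸ hq⟩

section CornerRankLePermRank

variable {n : ℕ} {z : Equiv.Perm (Fin n)} {A : Matrix (Fin n) (Fin n) ℂ}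

theorem cornerRank_le_permRank_succ_right {i j : ℕ} (hj : j < n) (hzj : (z ⟨j, hj⟩ : ℕ) < i)
    (h : cornerRank A i j ≤ permRank z i j) : cornerRank A i (j + 1) ≤ permRank z i (j + 1) := by
  rw [permRank_succ_right z i hj, if_pos hzj]
  exact (cornerRank_succ_right_le A i hj).trans (by omega)

theorem cornerRank_le_permRank_of_succ_right {i j : ℕ} (hj : j < n) (hzj : i ≤ (z ⟨j, hj⟩ : ℕ))
    (h : cornerRank A i (j + 1) ≤ permRank z i (j + 1)) : cornerRank A i j ≤ permRank z i j := by
  rw [permRank_succ_right z i hj, if_neg hzj.not_gt, add_zero] at h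
  exact (cornerRank_le_succ_right A i j).trans h

theorem cornerRank_le_permRank_succ_left (hz : z * z = 1) (hA : Aᵀ = A ∨ Aᵀ = -A) {i j : ℕ}
    (hi : i < n) (hzi : (z ⟨i, hi⟩ : ℕ) < j) (h : cornerRank A i j ≤ permRank z i j) :
    cornerRank A (i + 1) j ≤ permRank z (i + 1) j := by
  rw [cornerRank_comm hA, permRank_comm hz] at h ⊢
  exact cornerRank_le_permRank_succ_right hi hzi h

theorem cornerRank_le_permRank_of_succ_left (hz : z * z = 1) (hA : Aᵀ = A ∨ Aᵀ = -A) {i j : ℕ}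
    (hi : i < n) (hzi : j ≤ (z ⟨i, hi⟩ : ℕ)) (h : cornerRank A (i + 1) j ≤ permRank z (i + 1) j) :
    cornerRank A i j ≤ permRank z i j := by
  rw [cornerRank_comm hA, permRank_comm hz] at h ⊢
  exact cornerRank_le_permRank_of_succ_right hi hzi h

theorem cornerRank_le_permRank_of_mem_DO (hz : z * z = 1) (hA : Aᵀ = A ∨ Aᵀ = -A)
    (hEss : ∀ p ∈ Ess (DO n z),
      cornerRank A ((p.1 : ℕ) + 1) ((p.2 : ℕ) + 1) ≤
        permRank z ((p.1 : ℕ) + 1) ((p.2 : ℕ) + 1))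
    {a c : Fin n} (hD : (a, c) ∈ DO n z) :
    cornerRank A ((a : ℕ) + 1) ((c : ℕ) + 1) ≤ permRank z ((a : ℕ) + 1) ((c : ℕ) + 1) := by
  by_cases hE : (a, c) ∈ Ess (DO n z)
  · exact hEss _ hE
  rcases exists_right_or_below_of_notMem_Ess hD hE with ⟨hc, hD'⟩ | ⟨ha, hD'⟩
  · have h := cornerRank_le_permRank_of_mem_DO hz hA hEss hD'
    exact cornerRank_le_permRank_of_succ_right hc ((mem_DO_iff hz _ _).1 hD').2.2 h
  · have h := cornerRank_le_permRank_of_mem_DO hz hA hEss hD'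
    exact cornerRank_le_permRank_of_succ_left hz hA ha ((mem_DO_iff hz _ _).1 hD').2.1 h
termination_by (n - a) + (n - c)

theorem cornerRank_le_permRank_of_le_of_forall_mem_Ess (hz : z * z = 1) (hA : Aᵀ = A ∨ Aᵀ = -A)
    (hEss : ∀ p ∈ Ess (DO n z),
      cornerRank A ((p.1 : ℕ) + 1) ((p.2 : ℕ) + 1) ≤
        permRank z ((p.1 : ℕ) + 1) ((p.2 : ℕ) + 1)) :
    ∀ i j : ℕ, i ≤ n → j ≤ i → cornerRank A i j ≤ permRank z i j
  | i, 0, _, _ => (cornerRank_zero_right A i).trans_le (Nat.zero_le _)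
  | 0, _ + 1, _, hji => absurd hji (Nat.not_succ_le_zero _)
  | a + 1, c + 1, hi, hji => by
    have ha : a < n := by omega
    have hc : c < n := by omega
    by_cases hD : (⟨a, ha⟩, ⟨c, hc⟩) ∈ DO n z
    · exact cornerRank_le_permRank_of_mem_DO hz hA hEss hD
    by_cases hzc : (z ⟨c, hc⟩ : ℕ) < a + 1
    · exact cornerRank_le_permRank_succ_right hc hzc
        (cornerRank_le_permRank_of_le_of_forall_mem_Ess hz hA hEss _ _ hi (by omega))
    have hza : (z ⟨a, ha⟩ : ℕ) < c + 1 := by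
      rw [mem_DO_iff hz] at hD
      simp only [Fin.le_def, Fin.lt_def] at hD
      omega
    have hca : c < a := by
      rcases (Nat.le_of_succ_le_succ hji).lt_or_eq with h | rfl
      · exact h
      · exact (hzc hza).elim
    exact cornerRank_le_permRank_succ_left hz hA ha hza
      (cornerRank_le_permRank_of_le_of_forall_mem_Ess hz hA hEss _ _ ha.le hca)
termination_by i j => i + j

end CornerRankLePermRank

theorem statement10 (n : ℕ) (z : Equiv.Perm (Fin n)) (hz : z * z = 1)
    (A : Matrix (Fin n) (Fin n) ℂ) (hA : A.transpose = A ∨ A.transpose = -A) :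
    (∀ i j : ℕ, i ≤ n → j ≤ n → cornerRank A i j ≤ permRank z i j) ↔
      ∀ p ∈ Ess (DO n z),
        cornerRank A ((p.1 : ℕ) + 1) ((p.2 : ℕ) + 1) ≤
          permRank z ((p.1 : ℕ) + 1) ((p.2 : ℕ) + 1) := by
  refine ⟨fun h p _ => h _ _ p.1.isLt p.2.isLt, fun hEss i j hi hj => ?_⟩
  rcases le_total j i with hji | hij
  · exact cornerRank_le_permRank_of_le_of_forall_mem_Ess hz hA hEss i j hi hji
  · rw [cornerRank_comm hA, permRank_comm hz]
    exact cornerRank_le_permRank_of_le_of_forall_mem_Ess hz hA hEss j i hj hij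

end
end

section
/- Let n be a positive even integer and z ∈ I^FPF_n. Then MX^Sp_{z×21} = MX^Sp_{z×1×1} as subsets of Mat^Sp_{n+2}: a skew-symmetric (n+2)×(n+2) complex matrix A satisfies rank(A_{[i][j]}) ≤ rank((z×21)_{[i][j]}) for all i,j ∈ [n+2] if and only if it satisfies rank(A_{[i][j]}) ≤ rank((z×1×1)_{[i][j]}) for all i,j ∈ [n+2]. -/
open MvPolynomial

noncomputable section

/-! ### Auxiliary lemmas for `statement12` -/

lemma aux_finSumFinEquiv_symm_eq {m k : ℕ} (x : Fin (m + k)) :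
    finSumFinEquiv.symm x =
      if h : (x : ℕ) < m then Sum.inl ⟨x, h⟩
      else Sum.inr ⟨(x : ℕ) - m, by have := x.isLt; omega⟩ := by
  rw [Equiv.symm_apply_eq]
  split_ifs with h
  · ext; simp
  · ext; simp; omega

lemma aux_extPerm_apply_val {m k : ℕ} (z : Equiv.Perm (Fin m)) (w : Equiv.Perm (Fin k))
    (x : Fin (m + k)) :
    ((extPerm z w) x : ℕ) =
      if h : (x : ℕ) < m then (z ⟨x, h⟩ : ℕ)
      else m + (w ⟨(x : ℕ) - m, by have := x.isLt; omega⟩ : ℕ) := by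
  simp only [extPerm, Equiv.trans_apply, Equiv.sumCongr_apply, aux_finSumFinEquiv_symm_eq]
  split_ifs with h <;> simp

lemma aux_swap2_val : ∀ t : Fin 2, ((Equiv.swap (0 : Fin 2) 1) t : ℕ) = 1 - (t : ℕ) := by
  decide

lemma aux_val21 {n : ℕ} (z : Equiv.Perm (Fin n)) (x : Fin (n + 2)) :
    ((extPerm z (Equiv.swap (0 : Fin 2) 1)) x : ℕ) =
      if h : (x : ℕ) < n then (z ⟨x, h⟩ : ℕ)
      else if (x : ℕ) = n then n + 1 else n := by
  have hx := x.isLt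
  rw [aux_extPerm_apply_val]
  split_ifs with h h2
  · rfl
  · rw [aux_swap2_val]; simp; omega
  · rw [aux_swap2_val]; simp; omega

lemma aux_val11 {n : ℕ} (z : Equiv.Perm (Fin n)) (x : Fin (n + 2)) :
    ((extPerm (extPerm z (1 : Equiv.Perm (Fin 1))) (1 : Equiv.Perm (Fin 1))) x : ℕ) =
      if h : (x : ℕ) < n then (z ⟨x, h⟩ : ℕ) else (x : ℕ) := by
  have hx := x.isLt
  rw [aux_extPerm_apply_val (m := n + 1) (k := 1)]
  split_ifs with h h2
  · rw [aux_extPerm_apply_val (m := n) (k := 1)]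
    rw [dif_pos h2]
  · rw [aux_extPerm_apply_val (m := n) (k := 1)]
    rw [dif_neg h2]
    simp; omega
  · have h1 : ∀ t : Fin 1, ((1 : Equiv.Perm (Fin 1)) t : ℕ) = 0 := by decide
    rw [h1]; omega
  · have h1 : ∀ t : Fin 1, ((1 : Equiv.Perm (Fin 1)) t : ℕ) = 0 := by decide
    rw [h1]; omega

lemma aux_permRank_decomp {n : ℕ} (y : Equiv.Perm (Fin (n + 2))) (i j : ℕ) :
    permRank y i j =
      (∑ x : Fin n,
        if (x : ℕ) < j ∧ ((y x.castSucc.castSucc : Fin (n + 2)) : ℕ) < i then 1 else 0)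
      + (if n < j ∧ ((y (Fin.last n).castSucc : Fin (n + 2)) : ℕ) < i then 1 else 0)
      + (if n + 1 < j ∧ ((y (Fin.last (n + 1)) : Fin (n + 2)) : ℕ) < i then 1 else 0) := by
  rw [permRank, Finset.card_filter, Fin.sum_univ_castSucc, Fin.sum_univ_castSucc]
  simp [Fin.lt_iff_val_lt_val]

lemma aux_corner_le {n : ℕ} (hev : n % 2 = 0) (A : Matrix (Fin (n + 2)) (Fin (n + 2)) ℂ)
    (hA : A.transpose = -A) : cornerRank A (n + 1) (n + 1) ≤ n := by
  set B : Matrix (Fin (min (n + 1) (n + 2))) (Fin (min (n + 1) (n + 2))) ℂ :=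
    Matrix.of fun (a : Fin (min (n + 1) (n + 2))) (b : Fin (min (n + 1) (n + 2))) =>
      A ⟨(a : ℕ), lt_of_lt_of_le a.isLt (min_le_right (n + 1) (n + 2))⟩
        ⟨(b : ℕ), lt_of_lt_of_le b.isLt (min_le_right (n + 1) (n + 2))⟩ with hB
  have hcard : Fintype.card (Fin (min (n + 1) (n + 2))) = n + 1 := by
    simp
  have hskew : B.transpose = -B := by
    ext a b
    simpa [hB, Matrix.transpose_apply] using congrFun (congrFun hA
      ⟨(a : ℕ), lt_of_lt_of_le a.isLt (min_le_right (n + 1) (n + 2))⟩)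
      ⟨(b : ℕ), lt_of_lt_of_le b.isLt (min_le_right (n + 1) (n + 2))⟩
  have hdet : B.det = 0 := by
    have h1 : B.det = B.transpose.det := (Matrix.det_transpose B).symm
    rw [hskew, Matrix.det_neg, hcard] at h1
    have hodd : Odd (n + 1) := Nat.odd_iff.mpr (by omega)
    rw [hodd.neg_one_pow] at h1
    have : (2 : ℂ) * B.det = 0 := by ring_nf; linear_combination h1
    have h2 : (2 : ℂ) ≠ 0 := by norm_num
    exact (mul_eq_zero.mp this).resolve_left h2
  obtain ⟨v, hv0, hv⟩ := (Matrix.exists_mulVec_eq_zero_iff).mpr hdet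
  have hrn := LinearMap.finrank_range_add_finrank_ker (Matrix.mulVecLin B)
  rw [Module.finrank_fin_fun] at hrn
  have hker : 0 < Module.finrank ℂ (LinearMap.ker (Matrix.mulVecLin B)) := by
    rw [Module.finrank_pos_iff]
    have hmem : v ∈ LinearMap.ker (Matrix.mulVecLin B) := by
      simp [LinearMap.mem_ker, Matrix.mulVecLin_apply, hv]
    exact nontrivial_of_ne (⟨v, hmem⟩ : LinearMap.ker (Matrix.mulVecLin B)) 0
      (by simp [hv0, Subtype.ext_iff])
  have : cornerRank A (n + 1) (n + 1) = Matrix.rank B := rfl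
  rw [this, Matrix.rank]
  omega

theorem statement12 (n : ℕ) (hpos : 0 < n) (hev : n % 2 = 0)
    (z : Equiv.Perm (Fin n)) (hz : IsFPF z)
    (A : Matrix (Fin (n + 2)) (Fin (n + 2)) ℂ) (hA : A.transpose = -A) :
    (∀ i j : ℕ, i ≤ n + 2 → j ≤ n + 2 →
        cornerRank A i j ≤ permRank (extPerm z (Equiv.swap (0 : Fin 2) 1)) i j) ↔
      (∀ i j : ℕ, i ≤ n + 2 → j ≤ n + 2 →
        cornerRank A i j ≤
          permRank (extPerm (extPerm z (1 : Equiv.Perm (Fin 1)))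
            (1 : Equiv.Perm (Fin 1))) i j) := by
  set z21 := extPerm z (Equiv.swap (0 : Fin 2) 1) with hz21
  set z11 := extPerm (extPerm z (1 : Equiv.Perm (Fin 1))) (1 : Equiv.Perm (Fin 1)) with hz11
  have hv21n : ((z21 (Fin.last n).castSucc : Fin (n + 2)) : ℕ) = n + 1 := by
    rw [hz21, aux_val21]; simp
  have hv21n1 : ((z21 (Fin.last (n + 1)) : Fin (n + 2)) : ℕ) = n := by
    rw [hz21, aux_val21]; simp
  have hv11n : ((z11 (Fin.last n).castSucc : Fin (n + 2)) : ℕ) = n := by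
    rw [hz11, aux_val11]; simp
  have hv11n1 : ((z11 (Fin.last (n + 1)) : Fin (n + 2)) : ℕ) = n + 1 := by
    rw [hz11, aux_val11]; simp
  have hsmall21 : ∀ x : Fin n, ((z21 x.castSucc.castSucc : Fin (n + 2)) : ℕ) < n := by
    intro x
    rw [hz21, aux_val21,
      dif_pos (show ((x.castSucc.castSucc : Fin (n + 2)) : ℕ) < n by simp)]
    exact (z _).isLt
  have hsmall11 : ∀ x : Fin n, ((z11 x.castSucc.castSucc : Fin (n + 2)) : ℕ) < n := by
    intro x
    rw [hz11, aux_val11,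
      dif_pos (show ((x.castSucc.castSucc : Fin (n + 2)) : ℕ) < n by simp)]
    exact (z _).isLt
  have hvaleq : ∀ x : Fin n,
      ((z21 x.castSucc.castSucc : Fin (n + 2)) : ℕ) =
        ((z11 x.castSucc.castSucc : Fin (n + 2)) : ℕ) := by
    intro x
    have hx : ((x.castSucc.castSucc : Fin (n + 2)) : ℕ) < n := by simp
    rw [hz21, hz11, aux_val21, aux_val11, dif_pos hx, dif_pos hx]
  have hsum : ∀ i j : ℕ,
      (∑ x : Fin n,
        if (x : ℕ) < j ∧ ((z21 x.castSucc.castSucc : Fin (n + 2)) : ℕ) < i then 1 else 0)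
      = ∑ x : Fin n,
        if (x : ℕ) < j ∧ ((z11 x.castSucc.castSucc : Fin (n + 2)) : ℕ) < i then 1 else 0 := by
    intro i j
    refine Finset.sum_congr rfl fun x _ => ?_
    rw [hvaleq x]
  have hS : ∀ y : Equiv.Perm (Fin (n + 2)),
      (∀ x : Fin n, ((y x.castSucc.castSucc : Fin (n + 2)) : ℕ) < n) →
      (∑ x : Fin n,
        if (x : ℕ) < n + 1 ∧ ((y x.castSucc.castSucc : Fin (n + 2)) : ℕ) < n + 1
        then 1 else 0) = n := by
    intro y hy
    rw [Finset.sum_congr rfl fun x _ =>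
      if_pos ⟨by have := x.isLt; omega, by have := hy x; omega⟩]
    simp
  have hpr : ∀ i j : ℕ, ¬(i = n + 1 ∧ j = n + 1) →
      permRank z21 i j = permRank z11 i j := by
    intro i j hij
    rw [aux_permRank_decomp, aux_permRank_decomp, hsum i j, hv21n, hv21n1, hv11n, hv11n1]
    split_ifs <;> omega
  constructor
  · intro H i j hi hj
    by_cases hij : i = n + 1 ∧ j = n + 1
    · obtain ⟨h1, h2⟩ := hij
      subst h1; subst h2
      have hc := aux_corner_le hev A hA
      have hge : n ≤ permRank z11 (n + 1) (n + 1) := by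
        rw [aux_permRank_decomp, hS z11 hsmall11]
        omega
      omega
    · rw [← hpr i j hij]
      exact H i j hi hj
  · intro H i j hi hj
    by_cases hij : i = n + 1 ∧ j = n + 1
    · obtain ⟨h1, h2⟩ := hij
      subst h1; subst h2
      have hc := aux_corner_le hev A hA
      have hge : n ≤ permRank z21 (n + 1) (n + 1) := by
        rw [aux_permRank_decomp, hS z21 hsmall21]
        omega
      omega
    · rw [hpr i j hij]
      exact H i j hi hj

end
end

section
/- For every nonzero polynomial f ∈ ℤ[x_1,…,x_n] there exists an integer N ≥ n such that the image of f under the natural inclusion ℤ[x_1,…,x_n] ⊆ ℤ[x_1,…,x_N] does not belong to the ideal IΛ_N. Consequently, for any sequence n_1, n_2, n_3, … of positive integers with n_i → ∞, the intersection of the ideals IΛ_{n_i} (taken inside the polynomial ring in all the variables x_1, x_2, …) is zero. -/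
open MvPolynomial

noncomputable section

/-!
Let `f ≠ 0` have total degree `< m` and let `A = ℂ[t₁,…,tₙ]/(t₁ᵐ,…,tₙᵐ)`; then `f(t) ≠ 0` in `A`.
For `N ≥ mn`, send `x₁,…,x_N` to the elements `ζʲ tᵢ` (`ζ` a primitive `m`-th root of unity,
`j < m`, with `j = 0` giving `xᵢ ↦ tᵢ` for `i ≤ n`) followed by zeros. Since
`∏ⱼ (X + ζʲ t) = Xᵐ - (-t)ᵐ = Xᵐ` in `A[X]`, this point satisfies `∏ₖ (X + xₖ) = X^N`, so every
elementary symmetric polynomial, hence every symmetric polynomial without constant term,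
vanishes there. Thus `IΛ_N` lies in the kernel of the evaluation, but `f` does not.
-/

namespace MvPolynomial

variable {σ R A : Type*}

theorem aeval_esymm_eq_zero_of_prod_X_add_C_eq_X_pow [Fintype σ] [CommSemiring R]
    [CommSemiring A] [Algebra R A] {v : σ → A}
    (hv : ∏ i, (Polynomial.X + Polynomial.C (v i)) = Polynomial.X ^ Fintype.card σ)
    {k : ℕ} (hk : k ≠ 0) : aeval v (esymm σ R k) = 0 := by
  classical
  have hsum : aeval v (esymm σ R k) = ∑ t ∈ Finset.univ.powersetCard k, ∏ i ∈ t, v i := by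
    simp [esymm, map_sum, map_prod]
  rcases le_or_gt k (Fintype.card σ) with hle | hlt
  · have hcoeff := Finset.prod_X_add_C_coeff Finset.univ v (Nat.sub_le (Fintype.card σ) k)
    rw [Finset.card_univ, Nat.sub_sub_self hle, hv, Polynomial.coeff_X_pow,
      if_neg (by omega)] at hcoeff
    rw [hsum, ← hcoeff]
  · rw [hsum, Finset.powersetCard_eq_empty.mpr (by simpa using hlt), Finset.sum_empty]

theorem IsSymmetric.aeval_eq_algebraMap_constantCoeff [Fintype σ] [CommRing R] [CommRing A]
    [Algebra R A] {p : MvPolynomial σ R} (hp : p.IsSymmetric) {v : σ → A}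
    (hv : ∀ k ≠ 0, aeval v (esymm σ R k) = 0) :
    aeval v p = algebraMap R A (constantCoeff p) := by
  obtain ⟨P, hP⟩ := esymmAlgHom_surjective R (n := Fintype.card σ) le_rfl ⟨p, hp⟩
  replace hP : aeval (fun i : Fin _ => esymm σ R (i + 1)) P = p := by
    rw [← esymmAlgHom_apply, hP]
  have aeval_eq (w : σ → A) (hw : ∀ k ≠ 0, aeval w (esymm σ R k) = 0) :
      aeval w p = algebraMap R A (constantCoeff P) := by
    rw [← hP, ← AlgHom.comp_apply, comp_aeval]
    simp only [hw _ (Nat.succ_ne_zero _), aeval_zero']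
  -- The zero point satisfies `hv` too, and evaluation there is the constant coefficient.
  have hzero : ∀ k ≠ 0, aeval (fun _ : σ => (0 : A)) (esymm σ R k) = 0 := fun k hk =>
    aeval_esymm_eq_zero_of_prod_X_add_C_eq_X_pow (by simp) hk
  rw [aeval_eq v hv, ← aeval_eq _ hzero, aeval_zero']

theorem notMem_span_X_pow_of_totalDegree_lt [CommSemiring R] {p : MvPolynomial σ R} (hp : p ≠ 0)
    {m : ℕ} (hdeg : p.totalDegree < m) : p ∉ Ideal.span (Set.range fun i => X i ^ m) := by
  obtain ⟨s, hs⟩ := support_nonempty.mpr hp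
  have hrange : Set.range (fun i : σ => (X i : MvPolynomial σ R) ^ m) =
      (fun s => monomial s (1 : R)) '' Set.range fun i => Finsupp.single i m := by
    rw [← Set.range_comp]
    simp only [Function.comp_def, X_pow_eq_monomial]
  rw [hrange, mem_ideal_span_monomial_image]
  intro hmem
  obtain ⟨_, ⟨i, rfl⟩, hle⟩ := hmem s hs
  have := ((Finsupp.single_le_iff.mp hle).trans (le_degreeOf_of_mem_support i hs)).trans
    (degreeOf_le_totalDegree p i)
  omega

end MvPolynomial

theorem IsPrimitiveRoot.prod_X_add_C_pow_mul_eq_X_pow {K A : Type*} [CommRing K] [IsDomain K]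
    [CommRing A] [Algebra K A] {m : ℕ} (hm : 0 < m) {ζ : K} (hζ : IsPrimitiveRoot ζ m) {b : A}
    (hb : b ^ m = 0) :
    ∏ j : Fin m, (Polynomial.X + Polynomial.C (algebraMap K A ζ ^ (j : ℕ) * b)) =
      Polynomial.X ^ m := by
  have hroots := congrArg (Polynomial.map (Polynomial.eval₂RingHom (algebraMap K A) (-b)))
    (X_pow_sub_C_eq_prod (hζ.map_of_injective Polynomial.C_injective) hm
      (rfl : (Polynomial.X : Polynomial K) ^ m = _))
  simp only [Polynomial.map_sub, Polynomial.map_pow, Polynomial.map_X, Polynomial.map_C,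
    Polynomial.map_prod, Polynomial.coe_eval₂RingHom, Polynomial.eval₂_C,
    Polynomial.eval₂_X, Polynomial.eval₂_pow, Polynomial.eval₂_mul] at hroots
  rw [neg_pow, hb, mul_zero, map_zero, sub_zero] at hroots
  rw [Fin.prod_univ_eq_prod_range (fun j => Polynomial.X + Polynomial.C (algebraMap K A ζ ^ j * b)),
    hroots]
  refine Finset.prod_congr rfl fun j _ => ?_
  rw [mul_neg, map_neg, sub_neg_eq_add]

theorem exists_castLE_extension_prod_X_add_C_eq_X_pow {K A : Type*} [CommRing K] [IsDomain K]
    [CommRing A] [Algebra K A] {m n N : ℕ} (hm : 0 < m) {ζ : K} (hζ : IsPrimitiveRoot ζ m)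
    (hN : m * n ≤ N) (h : n ≤ N) {t : Fin n → A} (ht : ∀ i, t i ^ m = 0) :
    ∃ v : Fin N → A, v ∘ Fin.castLE h = t ∧
      ∏ k, (Polynomial.X + Polynomial.C (v k)) = Polynomial.X ^ N := by
  let e : (Fin m × Fin n) ⊕ Fin (N - m * n) ≃ Fin N :=
    (Equiv.sumCongr finProdFinEquiv (Equiv.refl _)).trans
      (finSumFinEquiv.trans (finCongr (by omega)))
  let g : (Fin m × Fin n) ⊕ Fin (N - m * n) → A :=
    Sum.elim (fun p => algebraMap K A ζ ^ (p.1 : ℕ) * t p.2) 0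
  refine ⟨g ∘ e.symm, funext fun i => ?_, ?_⟩
  · have he : e (Sum.inl (⟨0, hm⟩, i)) = Fin.castLE h i := by
      ext
      simp [e, finProdFinEquiv]
    simp [← he, g]
  · rw [← e.prod_comp, Fintype.prod_sum_type, Fintype.prod_prod_type_right]
    simp only [Function.comp_apply, Equiv.symm_apply_apply, g, Sum.elim_inl, Sum.elim_inr,
      Pi.zero_apply, map_zero, add_zero, Finset.prod_const, Finset.card_univ, Fintype.card_fin,
      hζ.prod_X_add_C_pow_mul_eq_X_pow hm (ht _), ← pow_mul, ← pow_add]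
    congr 1
    omega

theorem ILambda_le_ker_aeval {N : ℕ} {A : Type*} [CommRing A] {v : Fin N → A}
    (hv : ∏ i, (Polynomial.X + Polynomial.C (v i)) = Polynomial.X ^ N) :
    ILambda N ≤ RingHom.ker (aeval v) := by
  refine Ideal.span_le.mpr fun p ⟨hsym, hp⟩ => ?_
  have hesymm : ∀ k ≠ 0, aeval v (esymm (Fin N) ℤ k) = 0 := fun k hk =>
    aeval_esymm_eq_zero_of_prod_X_add_C_eq_X_pow (by rwa [Fintype.card_fin]) hk
  rw [SetLike.mem_coe, RingHom.mem_ker, IsSymmetric.aeval_eq_algebraMap_constantCoeff hsym hesymm,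
    constantCoeff_eq, hp, map_zero]

theorem rename_castLE_notMem_ILambda {n N : ℕ} {f : MvPolynomial (Fin n) ℤ} (hf : f ≠ 0)
    (hN : (f.totalDegree + 1) * n ≤ N) (h : n ≤ N) :
    rename (Fin.castLE h) f ∉ ILambda N := by
  set m := f.totalDegree + 1
  let J : Ideal (MvPolynomial (Fin n) ℂ) := Ideal.span (Set.range fun i => X i ^ m)
  let π := Ideal.Quotient.mkₐ ℂ J
  have hπ : ∀ i, π (X i) ^ m = 0 := fun i => by
    rw [← map_pow, Ideal.Quotient.mkₐ_eq_mk, Ideal.Quotient.eq_zero_iff_mem]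
    exact Ideal.subset_span ⟨i, rfl⟩
  obtain ⟨v, hvπ, hv⟩ := exists_castLE_extension_prod_X_add_C_eq_X_pow (Nat.succ_pos _)
    (Complex.isPrimitiveRoot_exp m (Nat.succ_ne_zero _)) hN h hπ
  intro hmem
  have hfJ : map (algebraMap ℤ ℂ) f ∈ J := by
    have hker := ILambda_le_ker_aeval hv hmem
    rwa [RingHom.mem_ker, aeval_rename, hvπ, ← aeval_map_algebraMap ℂ, ← Function.comp_def π X,
      ← aeval_unique, Ideal.Quotient.mkₐ_eq_mk, Ideal.Quotient.eq_zero_iff_mem] at hker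
  refine notMem_span_X_pow_of_totalDegree_lt ?_ ?_ hfJ
  · have := (map_injective (σ := Fin n) _ (algebraMap ℤ ℂ).injective_int).ne hf
    rwa [map_zero] at this
  · exact Nat.lt_succ_of_le (Finset.sup_mono (support_map_subset _ f))

theorem statement13 :
    (∀ (n : ℕ) (f : MvPolynomial (Fin n) ℤ), f ≠ 0 →
      ∃ (N : ℕ) (h : n ≤ N), rename (Fin.castLE h) f ∉ ILambda N) ∧
    (∀ ns : ℕ → ℕ, (∀ i, 0 < ns i) →
      Filter.Tendsto ns Filter.atTop Filter.atTop →
      ∀ (n : ℕ) (f : MvPolynomial (Fin n) ℤ),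
        (∀ (i : ℕ) (h : n ≤ ns i), rename (Fin.castLE h) f ∈ ILambda (ns i)) →
        f = 0) := by
  refine ⟨fun n f hf => ?_, fun ns _ hns n f hmem => ?_⟩
  · have h : n ≤ (f.totalDegree + 1) * n := Nat.le_mul_of_pos_left n (Nat.succ_pos _)
    exact ⟨_, h, rename_castLE_notMem_ILambda hf le_rfl h⟩
  · by_contra hf
    obtain ⟨i, hi⟩ := (hns.eventually_ge_atTop ((f.totalDegree + 1) * n)).exists
    have h : n ≤ ns i := (Nat.le_mul_of_pos_left n (Nat.succ_pos _)).trans hi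
    exact rename_castLE_notMem_ILambda hf hi h (hmem i h)

end
end
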